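/- arXiv:1002.4388 — 4 statements merged into one kernel-verified Lean document; each statement's English description precedes it below -/
import Mathlib

section
/- (Strong duality for quantum state discrimination.) For every discrimination problem (ρ_x)_{x∈X} on ℂ^n (with X nonempty), the maximum guessing probability over all POVMs equals the minimum of Re Tr(σ) over all Hermitian matrices σ such that σ − ρ_x is positive semidefinite for every x ∈ X; in particular this minimum is attained. -/
open scoped ComplexOrder
open Matrix Filter Topology

/-!
Since the set of POVMs is compact, some POVM `E` maximizes the guessing probability; the dual
optimum is the Hermitian part `σ` of `∑ₓ Eₓ ρₓ`, whose trace is the optimal guessing probability.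
Feasibility of `σ` is first-order optimality of `E`: for a rank-one `P = v v*` and an outcome
`y`, compressing every `Eₓ` by `1 - εP` and giving the freed weight `1 - (1 - εP)²` to `y` is
again a POVM, and its guessing probability is `p(E) + 2ε v*(ρ_y - σ)v + O(ε²)`. The minimality of
`σ` is weak duality: `Re Tr σ' - p(E) = ∑ₓ Re Tr(Eₓ (σ' - ρₓ)) ≥ 0` for every feasible `σ'`.
-/

theorem nonpos_of_eventually_mul_add_sq_mul_nonpos {a c : ℝ}
    (h : ∀ᶠ ε in 𝓝[>] 0, ε * a + ε ^ 2 * c ≤ 0) : a ≤ 0 := by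
  have hlim : Tendsto (fun ε => a + ε * c) (𝓝[>] 0) (𝓝 a) := by
    have : Continuous fun ε : ℝ => a + ε * c := by fun_prop
    simpa using (this.tendsto 0).mono_left nhdsWithin_le_nhds
  refine le_of_tendsto hlim ((h.and self_mem_nhdsWithin).mono fun ε ⟨hle, hpos⟩ => ?_)
  have hpos : (0 : ℝ) < ε := hpos
  nlinarith

namespace Matrix

variable {𝕜 n : Type*} [RCLike 𝕜]

theorem PosSemidef.norm_apply_sq_le {A : Matrix n n 𝕜} (hA : A.PosSemidef) (i j : n) :
    ‖A i j‖ ^ 2 ≤ RCLike.re (A i i) * RCLike.re (A j j) := by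
  have hdet := (hA.submatrix ![i, j]).det_nonneg
  rw [det_fin_two] at hdet
  have hji : A j i = star (A i j) := by rw [← conjTranspose_apply, hA.isHermitian.eq]
  simp only [submatrix_apply, Matrix.cons_val_zero, Matrix.cons_val_one, hji] at hdet
  have hre := (RCLike.nonneg_iff.mp hdet).1
  have hii := (RCLike.nonneg_iff.mp (hA.diag_nonneg (i := i))).2
  have hjj := (RCLike.nonneg_iff.mp (hA.diag_nonneg (i := j))).2
  rw [RCLike.star_def, RCLike.mul_conj, map_sub, RCLike.mul_re, hii, hjj] at hre
  simp only [mul_zero, sub_zero] at hre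
  rw [← RCLike.ofReal_pow, RCLike.ofReal_re] at hre
  linarith

theorem isHermitian_selfAdjointPart (T : Matrix n n 𝕜) :
    (selfAdjointPart ℝ T : Matrix n n 𝕜).IsHermitian :=
  (selfAdjointPart ℝ T).prop

variable [Fintype n]

theorem PosSemidef.trace_mul_nonneg {A B : Matrix n n 𝕜} (hA : A.PosSemidef)
    (hB : B.PosSemidef) : 0 ≤ (A * B).trace := by
  have hAB : (A * B).trace = star (1 : n → 𝕜) ⬝ᵥ (A ⊙ Bᵀ) *ᵥ 1 := by
    simp [trace, mul_apply, dotProduct, mulVec]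
  exact hAB ▸ (hA.hadamard hB.transpose).dotProduct_mulVec_nonneg 1

theorem isClosed_setOf_posSemidef : IsClosed {A : Matrix n n 𝕜 | A.PosSemidef} := by
  simp only [posSemidef_iff_dotProduct_mulVec, Set.ofPred_and, Set.ofPred_forall]
  exact (isClosed_eq continuous_id.matrix_conjTranspose continuous_id).inter
    (isClosed_iInter fun v => isClosed_le continuous_const
      (continuous_const.dotProduct (continuous_id.matrix_mulVec continuous_const)))

theorem re_trace_conjTranspose (A : Matrix n n 𝕜) : RCLike.re Aᴴ.trace = RCLike.re A.trace := by
  rw [trace_conjTranspose, RCLike.star_def, RCLike.conj_re]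

theorem IsHermitian.re_trace_mul_mul_swap {A B P : Matrix n n 𝕜} (hA : A.IsHermitian)
    (hB : B.IsHermitian) (hP : P.IsHermitian) :
    RCLike.re (A * P * B).trace = RCLike.re (P * A * B).trace := by
  rw [← re_trace_conjTranspose, conjTranspose_mul, conjTranspose_mul, hA.eq, hB.eq, hP.eq,
    trace_mul_comm, mul_assoc]

theorem IsHermitian.re_trace_one_sub_smul_mul {A B P : Matrix n n 𝕜} [DecidableEq n]
    (hA : A.IsHermitian) (hB : B.IsHermitian) (hP : P.IsHermitian) (ε : ℝ) :
    RCLike.re ((1 - ε • P) * A * (1 - ε • P) * B).trace = RCLike.re (A * B).trace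
      - 2 * ε * RCLike.re (P * A * B).trace + ε ^ 2 * RCLike.re (P * A * P * B).trace := by
  have h := hA.re_trace_mul_mul_swap hB hP
  simp only [sub_mul, mul_sub, one_mul, mul_one, smul_mul_assoc, mul_smul_comm, trace_sub,
    trace_smul, map_sub, RCLike.smul_re] at h ⊢
  rw [h]
  ring

theorem IsHermitian.re_trace_mul_selfAdjointPart {P : Matrix n n 𝕜} (hP : P.IsHermitian)
    (T : Matrix n n 𝕜) :
    RCLike.re (P * (selfAdjointPart ℝ T : Matrix n n 𝕜)).trace = RCLike.re (P * T).trace := by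
  have h : RCLike.re (P * Tᴴ).trace = RCLike.re (P * T).trace := by
    rw [← hP.eq, ← conjTranspose_mul, re_trace_conjTranspose, hP.eq, trace_mul_comm]
  rw [selfAdjointPart_apply_coe, mul_smul_comm, trace_smul, RCLike.smul_re, mul_add, trace_add,
    map_add, star_eq_conjTranspose, h, invOf_eq_inv]
  ring

theorem re_trace_selfAdjointPart [DecidableEq n] (T : Matrix n n 𝕜) :
    RCLike.re (selfAdjointPart ℝ T : Matrix n n 𝕜).trace = RCLike.re T.trace := by
  simpa only [one_mul] using isHermitian_one.re_trace_mul_selfAdjointPart T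

theorem trace_vecMulVec_star_mul (v : n → 𝕜) (M : Matrix n n 𝕜) :
    (vecMulVec v (star v) * M).trace = star v ⬝ᵥ M *ᵥ v := by
  rw [vecMulVec_mul, trace_vecMulVec, dotProduct_comm, dotProduct_mulVec]

theorem eventually_posSemidef_one_sub_mul_conjTranspose [DecidableEq n] (v : n → 𝕜) :
    ∀ᶠ ε in 𝓝[>] (0 : ℝ), (1 - (1 - ε • vecMulVec v (star v)) *
      (1 - ε • vecMulVec v (star v))ᴴ).PosSemidef := by
  set P := vecMulVec v (star v)
  obtain ⟨s, -, hvv⟩ := RCLike.nonneg_iff_exists_ofReal.mp (dotProduct_star_self_nonneg v)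
  have hPP : P * P = s • P := by
    rw [vecMulVec_mul_vecMulVec, ← hvv, vecMulVec_smul, RCLike.real_smul_eq_coe_smul (K := 𝕜)]
  have hsmall : ∀ᶠ ε in 𝓝[>] (0 : ℝ), ε * s < 2 := by
    have : Tendsto (fun ε : ℝ => ε * s) (𝓝[>] 0) (𝓝 0) := by
      simpa using ((continuous_mul_const s).tendsto 0).mono_left nhdsWithin_le_nhds
    exact this.eventually_lt_const two_pos
  refine (hsmall.and self_mem_nhdsWithin).mono fun ε ⟨hε, hpos⟩ => ?_
  have hpos : (0 : ℝ) < ε := hpos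
  have hG : (1 - ε • P)ᴴ = 1 - ε • P := by
    simp [P, conjTranspose_smul, (posSemidef_vecMulVec_self_star v).isHermitian.eq]
  have h : 1 - (1 - ε • P) * (1 - ε • P)ᴴ = (ε * (2 - ε * s)) • P := by
    rw [hG]
    simp only [sub_mul, mul_sub, one_mul, mul_one, smul_mul_assoc, mul_smul_comm, hPP, smul_smul]
    module
  rw [h]
  exact (posSemidef_vecMulVec_self_star v).smul (by nlinarith)

end Matrix

namespace StateDiscrimination

variable {𝕜 n X : Type*} [RCLike 𝕜] [DecidableEq n] [Fintype X]

variable (𝕜 n X) in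
def povms : Set (X → Matrix n n 𝕜) := {E | (∀ x, (E x).PosSemidef) ∧ ∑ x, E x = 1}

theorem povms_nonempty [Nonempty X] : (povms 𝕜 n X).Nonempty :=
  ⟨fun _ => (Fintype.card X : ℝ)⁻¹ • 1, fun _ => PosSemidef.one.smul (by positivity), by
    simp [Finset.sum_const, ← Nat.cast_smul_eq_nsmul ℝ, smul_smul]⟩

theorem re_apply_self_le_one {E : X → Matrix n n 𝕜} (hE : E ∈ povms 𝕜 n X) (x : X) (i : n) :
    RCLike.re (E x i i) ≤ 1 := by
  have hsum : ∑ y, RCLike.re (E y i i) = 1 := by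
    simpa [← map_sum, ← Matrix.sum_apply] using congrArg (fun M => RCLike.re (M i i)) hE.2
  exact hsum ▸ Finset.single_le_sum (fun y _ => (RCLike.nonneg_iff.mp (hE.1 y).diag_nonneg).1)
    (Finset.mem_univ x)

variable [Fintype n]

theorem isClosed_povms : IsClosed (povms 𝕜 n X) := by
  simp only [povms, Set.ofPred_and, Set.ofPred_forall]
  exact (isClosed_iInter fun x =>
      (isClosed_setOf_posSemidef (𝕜 := 𝕜) (n := n)).preimage (continuous_apply x)).inter
    (isClosed_eq (continuous_finsetSum _ fun x _ => continuous_apply x) continuous_const)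

theorem isCompact_povms : IsCompact (povms 𝕜 n X) := by
  have hbox : IsCompact (Set.univ.pi fun _ : X => (Set.univ.pi fun _ : n =>
      Set.univ.pi fun _ : n => Metric.closedBall (0 : 𝕜) 1 : Set (Matrix n n 𝕜))) :=
    isCompact_univ_pi fun _ => isCompact_univ_pi fun _ => isCompact_univ_pi fun _ =>
      isCompact_closedBall 0 1
  refine hbox.of_isClosed_subset isClosed_povms fun E hE x _ i _ j _ => ?_
  rw [mem_closedBall_zero_iff, ← sq_le_one_iff₀ (norm_nonneg _)]
  refine ((hE.1 x).norm_apply_sq_le i j).trans ?_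
  simpa using mul_le_one₀ (re_apply_self_le_one hE x i)
    (RCLike.nonneg_iff.mp (hE.1 x).diag_nonneg).1 (re_apply_self_le_one hE x j)

def guessingProb (ρ E : X → Matrix n n 𝕜) : ℝ := ∑ x, RCLike.re (E x * ρ x).trace

theorem exists_isMaxOn_guessingProb [Nonempty X] (ρ : X → Matrix n n 𝕜) :
    ∃ E ∈ povms 𝕜 n X, IsMaxOn (guessingProb ρ) (povms 𝕜 n X) E :=
  isCompact_povms.exists_isMaxOn povms_nonempty <| Continuous.continuousOn <|
    continuous_finsetSum _ fun x _ => RCLike.continuous_re.comp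
      ((continuous_apply x).matrix_mul continuous_const).matrix_trace

theorem guessingProb_le_re_trace {ρ E : X → Matrix n n 𝕜} (hE : E ∈ povms 𝕜 n X)
    {σ : Matrix n n 𝕜} (hσ : ∀ x, (σ - ρ x).PosSemidef) :
    guessingProb ρ E ≤ RCLike.re σ.trace := by
  have hσE : RCLike.re σ.trace = ∑ x, RCLike.re (E x * σ).trace := by
    rw [← map_sum, ← trace_sum, ← Finset.sum_mul, hE.2, one_mul]
  rw [hσE, guessingProb]
  refine Finset.sum_le_sum fun x _ => ?_
  have h := (RCLike.nonneg_iff.mp ((hE.1 x).trace_mul_nonneg (hσ x))).1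
  rw [mul_sub, trace_sub, map_sub] at h
  linarith

section Perturbation

variable [DecidableEq X]

def conjAddSingle (E : X → Matrix n n 𝕜) (G : Matrix n n 𝕜) (y : X) : X → Matrix n n 𝕜 :=
  fun x => G * E x * Gᴴ + if x = y then 1 - G * Gᴴ else 0

theorem conjAddSingle_mem_povms {E : X → Matrix n n 𝕜} (hE : E ∈ povms 𝕜 n X)
    {G : Matrix n n 𝕜} (hG : (1 - G * Gᴴ).PosSemidef) (y : X) :
    conjAddSingle E G y ∈ povms 𝕜 n X := by
  refine ⟨fun x => ((hE.1 x).mul_mul_conjTranspose_same G).add ?_, ?_⟩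
  · rcases eq_or_ne x y with rfl | hxy
    · simpa using hG
    · simpa [hxy] using PosSemidef.zero
  · simp [conjAddSingle, Finset.sum_add_distrib, ← Finset.sum_mul, ← Finset.mul_sum, hE.2]

theorem guessingProb_conjAddSingle (ρ E : X → Matrix n n 𝕜) (G : Matrix n n 𝕜) (y : X) :
    guessingProb ρ (conjAddSingle E G y) =
      ∑ x, RCLike.re (G * E x * Gᴴ * ρ x).trace + RCLike.re ((1 - G * Gᴴ) * ρ y).trace := by
  simp only [guessingProb, conjAddSingle, add_mul, trace_add, map_add, Finset.sum_add_distrib]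
  congr 1
  simp [ite_mul, apply_ite]

theorem guessingProb_conjAddSingle_one_sub_smul {ρ E : X → Matrix n n 𝕜}
    (hρ : ∀ x, (ρ x).IsHermitian) (hE : ∀ x, (E x).IsHermitian) {P : Matrix n n 𝕜}
    (hP : P.IsHermitian) (y : X) : ∃ c : ℝ, ∀ ε : ℝ,
      guessingProb ρ (conjAddSingle E (1 - ε • P) y) = guessingProb ρ E
        + ε * (2 * (RCLike.re (P * ρ y).trace - RCLike.re (P * ∑ x, E x * ρ x).trace))
        + ε ^ 2 * c := by
  refine ⟨∑ x, RCLike.re (P * E x * P * ρ x).trace - RCLike.re (P * P * ρ y).trace, fun ε => ?_⟩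
  have hG : (1 - ε • P)ᴴ = 1 - ε • P := by simp [conjTranspose_smul, hP.eq]
  have hsq : 1 - (1 - ε • P) * (1 - ε • P) = (2 * ε) • P - ε ^ 2 • (P * P) := by
    simp only [sub_mul, mul_sub, one_mul, mul_one, smul_mul_assoc, mul_smul_comm]
    module
  rw [guessingProb_conjAddSingle, hG, hsq, guessingProb,
    Finset.sum_congr rfl fun x _ => (hE x).re_trace_one_sub_smul_mul (hρ x) hP ε,
    Finset.mul_sum, trace_sum, map_sum]
  simp only [sub_mul, smul_mul_assoc, trace_sub, trace_smul, map_sub, RCLike.smul_re,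
    Finset.sum_add_distrib, Finset.sum_sub_distrib, ← Finset.mul_sum, mul_assoc]
  ring

end Perturbation

theorem posSemidef_selfAdjointPart_sub_of_isMaxOn {ρ E : X → Matrix n n 𝕜}
    (hρ : ∀ x, (ρ x).IsHermitian) (hE : E ∈ povms 𝕜 n X)
    (hmax : IsMaxOn (guessingProb ρ) (povms 𝕜 n X) E) (y : X) :
    ((selfAdjointPart ℝ (∑ x, E x * ρ x) : Matrix n n 𝕜) - ρ y).PosSemidef := by
  classical
  set σ : Matrix n n 𝕜 := ↑(selfAdjointPart ℝ (∑ x, E x * ρ x))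
  have hσρ : (σ - ρ y).IsHermitian := (isHermitian_selfAdjointPart _).sub (hρ y)
  refine .of_dotProduct_mulVec_nonneg hσρ fun v => ?_
  have hP := (posSemidef_vecMulVec_self_star v).isHermitian
  obtain ⟨c, hc⟩ := guessingProb_conjAddSingle_one_sub_smul hρ (fun x => (hE.1 x).isHermitian) hP y
  have hfirst : 2 * (RCLike.re (vecMulVec v (star v) * ρ y).trace
      - RCLike.re (vecMulVec v (star v) * ∑ x, E x * ρ x).trace) ≤ 0 :=
    nonpos_of_eventually_mul_add_sq_mul_nonpos (c := c) <|
    (eventually_posSemidef_one_sub_mul_conjTranspose v).mono fun ε hε => by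
      have hle := hmax (conjAddSingle_mem_povms hE hε y)
      rw [Set.mem_ofPred_eq, hc] at hle
      linarith
  rw [← hP.re_trace_mul_selfAdjointPart (∑ x, E x * ρ x)] at hfirst
  refine RCLike.nonneg_iff.mpr ⟨?_, hσρ.im_star_dotProduct_mulVec_self v⟩
  rw [← trace_vecMulVec_star_mul, mul_sub, trace_sub, map_sub]
  linarith

end StateDiscrimination

open StateDiscrimination

theorem qsd_strong_duality_general {n : ℕ} {X : Type*} [Fintype X] [Nonempty X]
    (ρ : X → Matrix (Fin n) (Fin n) ℂ)
    (hρ : ∀ x, (ρ x).PosSemidef) :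
    ∃ σ : Matrix (Fin n) (Fin n) ℂ,
      σ.IsHermitian ∧ (∀ x, (σ - ρ x).PosSemidef) ∧
      (∀ σ' : Matrix (Fin n) (Fin n) ℂ, σ'.IsHermitian →
        (∀ x, (σ' - ρ x).PosSemidef) → (σ.trace).re ≤ (σ'.trace).re) ∧
      (σ.trace).re =
        sSup {p : ℝ | ∃ E : X → Matrix (Fin n) (Fin n) ℂ,
          (∀ x, (E x).PosSemidef) ∧ (∑ x, E x) = 1 ∧
          p = ∑ x, ((E x * ρ x).trace).re} := by
  obtain ⟨E, hE, hmax⟩ := exists_isMaxOn_guessingProb ρ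
  set σ : Matrix (Fin n) (Fin n) ℂ := ↑(selfAdjointPart ℝ (∑ x, E x * ρ x))
  have hval : σ.trace.re = guessingProb ρ E := by
    rw [← RCLike.re_to_complex, re_trace_selfAdjointPart, trace_sum, map_sum]
    rfl
  have hgreatest : IsGreatest {p : ℝ | ∃ E : X → Matrix (Fin n) (Fin n) ℂ,
      (∀ x, (E x).PosSemidef) ∧ (∑ x, E x) = 1 ∧ p = ∑ x, ((E x * ρ x).trace).re}
      (guessingProb ρ E) :=
    ⟨⟨E, hE.1, hE.2, rfl⟩, by rintro p ⟨F, hF, hF1, rfl⟩; exact hmax ⟨hF, hF1⟩⟩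
  refine ⟨σ, isHermitian_selfAdjointPart _,
    posSemidef_selfAdjointPart_sub_of_isMaxOn (fun x => (hρ x).isHermitian) hE hmax,
    fun σ' _ hσ' => hval ▸ guessingProb_le_re_trace hE hσ', ?_⟩
  rw [hgreatest.csSup_eq, hval]

/-- Strong duality for quantum state discrimination: the maximum guessing probability
over all POVMs equals the minimum of `Re Tr σ` over all Hermitian `σ` with `σ - ρ x`
positive semidefinite for every `x`; in particular this minimum is attained. -/
theorem qsd_strong_duality {n : ℕ} {X : Type*} [Fintype X] [Nonempty X]
    (ρ : X → Matrix (Fin n) (Fin n) ℂ)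
    (hρ : ∀ x, (ρ x).PosSemidef)
    (hρtr : (∑ x, (ρ x).trace) = 1) :
    ∃ σ : Matrix (Fin n) (Fin n) ℂ,
      σ.IsHermitian ∧ (∀ x, (σ - ρ x).PosSemidef) ∧
      (∀ σ' : Matrix (Fin n) (Fin n) ℂ, σ'.IsHermitian →
        (∀ x, (σ' - ρ x).PosSemidef) → (σ.trace).re ≤ (σ'.trace).re) ∧
      (σ.trace).re =
        sSup {p : ℝ | ∃ E : X → Matrix (Fin n) (Fin n) ℂ,
          (∀ x, (E x).PosSemidef) ∧ (∑ x, E x) = 1 ∧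
          p = ∑ x, ((E x * ρ x).trace).re} :=
  qsd_strong_duality_general ρ hρ
end

section
/- (Uniqueness of the Lagrange operator as dual minimizer.) If σ₁ and σ₂ are both Hermitian feasible matrices for a discrimination problem (ρ_x)_{x∈X} (i.e. σ_i − ρ_x is positive semidefinite for all x) and both attain the minimal trace among all feasible Hermitian matrices, then σ₁ = σ₂. -/
/-!
Suppose `σ₁ ≠ σ₂` are both optimal and put `D = σ₁ - σ₂`. For each `x`, the operators
`A = σ₁ - ρₓ` and `B = σ₂ - ρₓ` are positive with `A - B = D`, and since `ρₓ ≥ 0` their norms are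
bounded by `s = ‖σ₁‖ + ‖σ₂‖` uniformly in `x`. Then `D² ≤ 2 (A² + B²) ≤ 2 s (A + B)`, so
subtracting `ε D²` from the midpoint `(σ₁ + σ₂) / 2` keeps it feasible for a small `ε > 0`
independent of `x`. As `tr D² > 0`, this feasible operator has trace strictly below the optimal
value.
-/

open scoped ComplexOrder

section StarOrderedRing
variable {R : Type*} [NonUnitalRing R] [PartialOrder R] [StarRing R] [StarOrderedRing R]

theorem sub_mul_self_le_two_nsmul {a b : R} (ha : IsSelfAdjoint a) (hb : IsSelfAdjoint b) :
    (a - b) * (a - b) ≤ 2 • (a * a + b * b) := by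
  have h : 2 • (a * a + b * b) = (a - b) * (a - b) + (a + b) * (a + b) := by
    noncomm_ring
  rw [h]
  exact le_add_of_nonneg_right (ha.add hb).mul_self_nonneg
end StarOrderedRing

section CStarAlgebra
variable {A : Type*} [NonUnitalCStarAlgebra A] [PartialOrder A] [StarOrderedRing A]

theorem mul_self_le_norm_smul_self {a : A} (ha : 0 ≤ a) : a * a ≤ ‖a‖ • a := by
  obtain ⟨r, hr, rfl⟩ : ∃ r : A, IsSelfAdjoint r ∧ r * r = a :=
    ⟨CFC.sqrt a, (CFC.sqrt_nonneg a).isSelfAdjoint, CFC.sqrt_mul_sqrt_self a ha⟩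
  simpa only [hr.star_eq, mul_assoc] using
    CStarAlgebra.star_left_conjugate_le_norm_smul (a := r) (b := r * r)

theorem sub_mul_self_le_smul_add {a b : A} (ha : 0 ≤ a) (hb : 0 ≤ b) {s : ℝ}
    (has : ‖a‖ ≤ s) (hbs : ‖b‖ ≤ s) : (a - b) * (a - b) ≤ (2 * s) • (a + b) :=
  calc (a - b) * (a - b) ≤ 2 • (a * a + b * b) :=
        sub_mul_self_le_two_nsmul ha.isSelfAdjoint hb.isSelfAdjoint
    _ ≤ 2 • (s • a + s • b) := by
        gcongr
        · exact (mul_self_le_norm_smul_self ha).trans (smul_le_smul_of_nonneg_right has ha)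
        · exact (mul_self_le_norm_smul_self hb).trans (smul_le_smul_of_nonneg_right hbs hb)
    _ = (2 * s) • (a + b) := by module

/-- The weight `ε` of the correction term satisfies `2 (‖a‖ + ‖b‖) ε ≤ 1 / 2`, which is what
`le_perturbedMidpoint` needs. -/
noncomputable def perturbedMidpoint (a b : A) : A :=
  (2⁻¹ : ℝ) • (a + b) - (4 * (‖a‖ + ‖b‖) + 1)⁻¹ • ((a - b) * (a - b))

theorem IsSelfAdjoint.perturbedMidpoint {a b : A} (ha : IsSelfAdjoint a) (hb : IsSelfAdjoint b) :
    IsSelfAdjoint (perturbedMidpoint a b) :=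
  ((IsSelfAdjoint.all _).smul (ha.add hb)).sub
    ((IsSelfAdjoint.all _).smul (ha.sub hb).mul_self_nonneg.isSelfAdjoint)

theorem le_perturbedMidpoint {a b c : A} (hc : 0 ≤ c) (hca : c ≤ a) (hcb : c ≤ b) :
    c ≤ perturbedMidpoint a b := by
  set s := ‖a‖ + ‖b‖
  set ε : ℝ := (4 * s + 1)⁻¹
  have hε : 2 * s * ε ≤ 2⁻¹ := by
    rw [← div_eq_mul_inv, div_le_iff₀ (by positivity)]
    linarith [show 0 ≤ s by positivity]
  have has : ‖a - c‖ ≤ s :=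
    (CStarAlgebra.norm_le_norm_of_nonneg_of_le (sub_nonneg.2 hca) (sub_le_self a hc)).trans
      (le_add_of_nonneg_right (norm_nonneg b))
  have hbs : ‖b - c‖ ≤ s :=
    (CStarAlgebra.norm_le_norm_of_nonneg_of_le (sub_nonneg.2 hcb) (sub_le_self b hc)).trans
      (le_add_of_nonneg_left (norm_nonneg a))
  have hcorrection : ε • ((a - b) * (a - b)) ≤ (2⁻¹ : ℝ) • ((a - c) + (b - c)) :=
    calc ε • ((a - b) * (a - b)) = ε • (((a - c) - (b - c)) * ((a - c) - (b - c))) := by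
          rw [sub_sub_sub_cancel_right]
      _ ≤ ε • ((2 * s) • ((a - c) + (b - c))) := by
          gcongr; exact sub_mul_self_le_smul_add (sub_nonneg.2 hca) (sub_nonneg.2 hcb) has hbs
      _ = (2 * s * ε) • ((a - c) + (b - c)) := by module
      _ ≤ (2⁻¹ : ℝ) • ((a - c) + (b - c)) := by gcongr
  rw [perturbedMidpoint, ← sub_nonneg]
  convert sub_nonneg.2 hcorrection using 1
  module
end CStarAlgebra

open Matrix

theorem Matrix.IsHermitian.trace_mul_self_re_pos {n : Type*} [Fintype n] {D : Matrix n n ℂ}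
    (hD : D.IsHermitian) (h : D ≠ 0) : 0 < (D * D).trace.re := by
  have hpsd : (D * D).PosSemidef := by simpa only [hD.eq] using posSemidef_conjTranspose_mul_self D
  have hne : (D * D).trace ≠ 0 := by
    simpa only [hD.eq] using trace_conjTranspose_mul_self_eq_zero_iff.not.mpr h
  exact (Complex.pos_iff.1 (hpsd.trace_nonneg.lt_of_ne hne.symm)).1

open scoped MatrixOrder Matrix.Norms.L2Operator

theorem Matrix.trace_perturbedMidpoint_re {n : Type*} [Fintype n] [DecidableEq n]
    (a b : Matrix n n ℂ) :
    (perturbedMidpoint a b).trace.re = 2⁻¹ * (a.trace.re + b.trace.re) -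
      (4 * (‖a‖ + ‖b‖) + 1)⁻¹ * ((a - b) * (a - b)).trace.re := by
  simp only [perturbedMidpoint, trace_sub, trace_smul, trace_add, Complex.sub_re, Complex.smul_re,
    Complex.add_re, smul_eq_mul]

theorem qsd_dual_minimizer_unique_general {n : ℕ} {X : Type*}
    (ρ : X → Matrix (Fin n) (Fin n) ℂ)
    (hρ : ∀ x, (ρ x).PosSemidef)
    (σ₁ σ₂ : Matrix (Fin n) (Fin n) ℂ)
    (hσ₁ : σ₁.IsHermitian) (hσ₂ : σ₂.IsHermitian)
    (hfeas₁ : ∀ x, (σ₁ - ρ x).PosSemidef)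
    (hfeas₂ : ∀ x, (σ₂ - ρ x).PosSemidef)
    (hmin₁ : ∀ σ' : Matrix (Fin n) (Fin n) ℂ, σ'.IsHermitian →
      (∀ x, (σ' - ρ x).PosSemidef) → (σ₁.trace).re ≤ (σ'.trace).re)
    (hmin₂ : ∀ σ' : Matrix (Fin n) (Fin n) ℂ, σ'.IsHermitian →
      (∀ x, (σ' - ρ x).PosSemidef) → (σ₂.trace).re ≤ (σ'.trace).re) :
    σ₁ = σ₂ := by
  by_contra hne
  set σ := perturbedMidpoint σ₁ σ₂
  have hσ : σ.IsHermitian := (hσ₁.isSelfAdjoint.perturbedMidpoint hσ₂.isSelfAdjoint).isHermitian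
  have hfeas (x : X) : (σ - ρ x).PosSemidef :=
    le_perturbedMidpoint (hρ x).nonneg (hfeas₁ x) (hfeas₂ x)
  have hdrop := (hσ₁.sub hσ₂).trace_mul_self_re_pos (sub_ne_zero.2 hne)
  have h₁ := hmin₁ σ hσ hfeas
  have h₂ := hmin₂ σ hσ hfeas
  rw [trace_perturbedMidpoint_re] at h₁ h₂
  have hε : 0 < (4 * (‖σ₁‖ + ‖σ₂‖) + 1)⁻¹ := by positivity
  linarith [mul_pos hε hdrop]

/-- Uniqueness of the Lagrange operator as dual minimizer: if `σ₁` and `σ₂` are both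
Hermitian feasible matrices for the discrimination problem `(ρ x)` and both attain the
minimal trace among all feasible Hermitian matrices, then `σ₁ = σ₂`. -/
theorem qsd_dual_minimizer_unique {n : ℕ} {X : Type*} [Fintype X] [Nonempty X]
    (ρ : X → Matrix (Fin n) (Fin n) ℂ)
    (hρ : ∀ x, (ρ x).PosSemidef)
    (hρtr : (∑ x, (ρ x).trace) = 1)
    (σ₁ σ₂ : Matrix (Fin n) (Fin n) ℂ)
    (hσ₁ : σ₁.IsHermitian) (hσ₂ : σ₂.IsHermitian)
    (hfeas₁ : ∀ x, (σ₁ - ρ x).PosSemidef)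
    (hfeas₂ : ∀ x, (σ₂ - ρ x).PosSemidef)
    (hmin₁ : ∀ σ' : Matrix (Fin n) (Fin n) ℂ, σ'.IsHermitian →
      (∀ x, (σ' - ρ x).PosSemidef) → (σ₁.trace).re ≤ (σ'.trace).re)
    (hmin₂ : ∀ σ' : Matrix (Fin n) (Fin n) ℂ, σ'.IsHermitian →
      (∀ x, (σ' - ρ x).PosSemidef) → (σ₂.trace).re ≤ (σ'.trace).re) :
    σ₁ = σ₂ :=
  qsd_dual_minimizer_unique_general ρ hρ σ₁ σ₂ hσ₁ hσ₂ hfeas₁ hfeas₂ hmin₁ hmin₂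
end

section
/- (Optimal strategies with at most n² outcomes.) For every discrimination problem (ρ_x)_{x∈X} on ℂ^n there exists an optimal POVM (E_x)_{x∈X} (attaining P_guess) such that the set {x ∈ X : E_x ≠ 0} has at most n² elements. In particular, for qubits (n = 2) there is an optimal POVM with at most 4 nonzero elements. -/
/-!
The set of POVMs is compact, so an optimal POVM exists; take one with the fewest nonzero
outcomes. Its nonzero effects are Hermitian, and Hermitian matrices that are linearly
independent over `ℝ` stay so over `ℂ` (split a complex relation into its real and imaginary
parts using the adjoint), so if there were more than `n²` of them they would satisfy a real
relation `∑ c x • E x = 0`. Then `E x ↦ (1 - t c x) • E x` is again a POVM for small `|t|`, and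
its guessing probability is affine in `t`, so optimality makes it constant in `t`. Pushing `t`
up to `1 / max c` keeps the POVM optimal and kills an outcome, a contradiction.
-/

open scoped ComplexOrder

open Finset Module

theorem LinearIndependent.complex_of_real_of_isSelfAdjoint {ι M : Type*}
    [AddCommGroup M] [Module ℂ M] [StarAddMonoid M] [StarModule ℂ M] {v : ι → M}
    (hv : ∀ i, IsSelfAdjoint (v i)) (h : LinearIndependent ℝ v) : LinearIndependent ℂ v := by
  rw [linearIndependent_iff'] at h ⊢
  intro s g hg i hi
  have hconj : ∑ i ∈ s, star (g i) • v i = 0 := by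
    simpa [star_sum, (hv _).star_eq] using congrArg star hg
  have hre : ∑ i ∈ s, (g i).re • v i = 0 := by
    simp_rw [← Complex.coe_smul, Complex.re_eq_add_conj, div_eq_inv_mul, mul_smul, add_smul,
      ← smul_sum, sum_add_distrib, hg]
    simpa using hconj
  have him : ∑ i ∈ s, (g i).im • v i = 0 := by
    simp_rw [← Complex.coe_smul, Complex.im_eq_sub_conj, div_eq_inv_mul, mul_smul, sub_smul,
      ← smul_sum, sum_sub_distrib, hg]
    simpa using hconj
  exact Complex.ext (h s _ hre i hi) (h s _ him i hi)

theorem LinearIndepOn.ncard_le_finrank_of_isSelfAdjoint {ι M : Type*}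
    [AddCommGroup M] [Module ℂ M] [StarAddMonoid M] [StarModule ℂ M] [Module.Finite ℂ M]
    {v : ι → M} {s : Set ι} (hv : ∀ i ∈ s, IsSelfAdjoint (v i)) (h : LinearIndepOn ℝ v s) :
    s.ncard ≤ finrank ℂ M := by
  have hC := LinearIndependent.complex_of_real_of_isSelfAdjoint (fun i : s ↦ hv i i.2) h
  have := hC.finite
  have := Fintype.ofFinite s
  rw [← Nat.card_coe_set_eq, Nat.card_eq_fintype_card]
  exact hC.fintype_card_le_finrank

theorem exists_pos_mul_abs_le_one {X : Type*} [Fintype X] (c : X → ℝ) :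
    ∃ ε > 0, ∀ x, ε * |c x| ≤ 1 := by
  set M := ∑ x, |c x|
  have hM : 0 ≤ M := sum_nonneg fun x _ ↦ abs_nonneg (c x)
  refine ⟨(M + 1)⁻¹, by positivity, fun x ↦ ?_⟩
  rw [inv_mul_le_one₀ (by positivity)]
  linarith [single_le_sum (fun y _ ↦ abs_nonneg (c y)) (mem_univ x) (f := fun y ↦ |c y|)]

section POVM

variable {X A : Type*} [Fintype X]

def IsPOVM [AddCommMonoid A] [One A] [LE A] (E : X → A) : Prop :=
  (∀ x, 0 ≤ E x) ∧ ∑ x, E x = 1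

section Ring

variable [Ring A] [PartialOrder A] [Module ℝ A] [PosSMulMono ℝ A] {E : X → A} {c : X → ℝ}

theorem IsPOVM.sub_smul_smul (hE : IsPOVM E) (hc : ∑ x, c x • E x = 0) {t : ℝ}
    (ht : ∀ x, t * c x ≤ 1) : IsPOVM (E - t • (c • E)) := by
  refine ⟨fun x ↦ ?_, ?_⟩
  · have hx : (E - t • (c • E)) x = (1 - t * c x) • E x := by
      simp [sub_smul, mul_smul]
    rw [hx]
    exact smul_nonneg (by linarith [ht x]) (hE.1 x)
  · simp [sum_sub_distrib, ← smul_sum, hc, hE.2]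

theorem IsPOVM.map_smul_eq_zero_of_isMaxOn (f : (X → A) →ₗ[ℝ] ℝ) (hE : IsPOVM E)
    (hmax : IsMaxOn f {F | IsPOVM F} E) (hc : ∑ x, c x • E x = 0) : f (c • E) = 0 := by
  obtain ⟨ε, hε, hεc⟩ := exists_pos_mul_abs_le_one c
  have key : ∀ t, |t| = ε → 0 ≤ t * f (c • E) := by
    intro t ht
    have hF := isMaxOn_iff.1 hmax _ (hE.sub_smul_smul hc (t := t) fun x ↦ ?_)
    · simp only [map_sub, map_smul, smul_eq_mul] at hF
      linarith
    calc t * c x ≤ |t * c x| := le_abs_self _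
      _ = ε * |c x| := by rw [abs_mul, ht]
      _ ≤ 1 := hεc x
  have h₁ := key ε (abs_of_pos hε)
  have h₂ := key (-ε) (by rw [abs_neg, abs_of_pos hε])
  nlinarith

theorem IsPOVM.exists_isMaxOn_ncard_lt (f : (X → A) →ₗ[ℝ] ℝ) (hE : IsPOVM E)
    (hmax : IsMaxOn f {F | IsPOVM F} E) (hc : ∑ x, c x • E x = 0)
    (hsupp : ∀ x, c x ≠ 0 → E x ≠ 0) (hne : c ≠ 0) :
    ∃ F, IsPOVM F ∧ IsMaxOn f {F | IsPOVM F} F ∧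
      {x | F x ≠ 0}.ncard < {x | E x ≠ 0}.ncard := by
  wlog hpos : ∃ x, 0 < c x generalizing c
  · refine this (c := -c) (by simp [neg_smul, hc]) (by simpa using hsupp) (neg_ne_zero.2 hne) ?_
    obtain ⟨x, hx⟩ := Function.ne_iff.1 hne
    push Not at hpos
    exact ⟨x, neg_pos.2 ((hpos x).lt_of_ne hx)⟩
  obtain ⟨x₀, hx₀⟩ := hpos
  have : Nonempty X := ⟨x₀⟩
  obtain ⟨x₁, hx₁⟩ := Finite.exists_max c
  have hc₁ : 0 < c x₁ := hx₀.trans_le (hx₁ x₀)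
  -- the largest step that keeps all coefficients `1 - t * c x` nonnegative
  set F := E - (c x₁)⁻¹ • (c • E)
  have hF : ∀ x, F x = (1 - (c x₁)⁻¹ * c x) • E x := fun x ↦ by simp [F, sub_smul, mul_smul]
  have hFPOVM : IsPOVM F := hE.sub_smul_smul hc fun x ↦ by
    rw [inv_mul_le_one₀ hc₁]; exact hx₁ x
  have hfF : f F = f E := by
    simp [F, map_sub, map_smul, hE.map_smul_eq_zero_of_isMaxOn f hmax hc]
  have hsub : {x | F x ≠ 0} ⊆ {x | E x ≠ 0} := fun x hFx hEx ↦ hFx (by simp [hF, hEx])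
  have hFx₁ : F x₁ = 0 := by simp [hF, hc₁.ne']
  have hlt : {x | F x ≠ 0} ⊂ {x | E x ≠ 0} :=
    (Set.ssubset_iff_of_subset hsub).2 ⟨x₁, hsupp x₁ hc₁.ne', fun h ↦ h hFx₁⟩
  exact ⟨F, hFPOVM, fun G hG ↦ hfF ▸ hmax hG, Set.ncard_lt_ncard hlt⟩

end Ring

section CStarAlgebra

variable [CStarAlgebra A] [PartialOrder A] [StarOrderedRing A] {E : X → A}

theorem IsPOVM.le_one (hE : IsPOVM E) (x : X) : E x ≤ 1 :=
  hE.2 ▸ single_le_sum (fun y _ ↦ hE.1 y) (mem_univ x)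

theorem IsPOVM.norm_le (hE : IsPOVM E) (x : X) : ‖E x‖ ≤ ‖(1 : A)‖ :=
  CStarAlgebra.norm_le_norm_of_nonneg_of_le (hE.1 x) (hE.le_one x)

theorem isPOVM_pi_single [DecidableEq X] (x₀ : X) : IsPOVM (Pi.single x₀ (1 : A)) := by
  refine ⟨fun x ↦ ?_, by simp⟩
  rcases eq_or_ne x x₀ with rfl | hx
  · simp
  · simp [hx]

theorem isCompact_setOf_isPOVM [ProperSpace A] : IsCompact {E : X → A | IsPOVM E} := by
  refine Metric.isCompact_of_isClosed_isBounded ?_ ?_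
  · simp only [IsPOVM, Set.ofPred_and, Set.ofPred_forall]
    exact (isClosed_iInter fun x ↦ CStarAlgebra.isClosed_nonneg.preimage (continuous_apply x))
      |>.inter (isClosed_eq (by fun_prop) continuous_const)
  · refine (Metric.isBounded_closedBall (x := 0) (r := ‖(1 : A)‖)).subset fun E hE ↦ ?_
    rw [mem_closedBall_zero_iff, pi_norm_le_iff_of_nonneg (norm_nonneg _)]
    exact hE.norm_le

theorem exists_isPOVM_isMaxOn [FiniteDimensional ℂ A] [Nonempty X] (f : (X → A) →ₗ[ℝ] ℝ) :
    ∃ E, IsPOVM E ∧ IsMaxOn f {F | IsPOVM F} E := by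
  classical
  obtain ⟨x₀⟩ := ‹Nonempty X›
  exact isCompact_setOf_isPOVM.exists_isMaxOn ⟨_, isPOVM_pi_single x₀⟩
    f.continuous_of_finiteDimensional.continuousOn

theorem exists_isPOVM_isMaxOn_ncard_le_finrank [FiniteDimensional ℂ A] [Nonempty X]
    (f : (X → A) →ₗ[ℝ] ℝ) :
    ∃ E, IsPOVM E ∧ IsMaxOn f {F | IsPOVM F} E ∧ {x | E x ≠ 0}.ncard ≤ finrank ℂ A := by
  let S := {E : X → A | IsPOVM E ∧ IsMaxOn f {F | IsPOVM F} E}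
  have hS : S.Nonempty := exists_isPOVM_isMaxOn f
  set E := Function.argminOn (fun E : X → A ↦ {x | E x ≠ 0}.ncard) S hS
  obtain ⟨hE, hmax⟩ : E ∈ S := Function.argminOn_mem _ S hS
  refine ⟨E, hE, hmax, not_lt.1 fun hbig ↦ ?_⟩
  have hdep : ¬ LinearIndepOn ℝ E {x | E x ≠ 0} := fun hli ↦ hbig.not_ge <|
    hli.ncard_le_finrank_of_isSelfAdjoint fun x _ ↦ .of_nonneg (hE.1 x)
  obtain ⟨l, hl, hlE, hl0⟩ : ∃ l ∈ Finsupp.supported ℝ ℝ {x | E x ≠ 0},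
      Finsupp.linearCombination ℝ E l = 0 ∧ l ≠ 0 := by
    simpa [linearIndepOn_iff] using hdep
  obtain ⟨F, hF, hFmax, hlt⟩ := hE.exists_isMaxOn_ncard_lt f hmax (c := l)
    (by simpa [Finsupp.linearCombination_apply, Finsupp.sum_fintype] using hlE)
    (fun x hx ↦ hl (Finsupp.mem_support_iff.2 hx)) (by simpa using hl0)
  exact Function.not_lt_argminOn (fun E : X → A ↦ {x | E x ≠ 0}.ncard) S ⟨hF, hFmax⟩ hlt

end CStarAlgebra

end POVM

section Matrix

open scoped Matrix.Norms.L2Operator MatrixOrder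

variable {X m : Type*} [Fintype X] [DecidableEq m]

theorem isPOVM_iff_posSemidef {E : X → Matrix m m ℂ} :
    IsPOVM E ↔ (∀ x, (E x).PosSemidef) ∧ ∑ x, E x = 1 := by
  simp only [IsPOVM, Matrix.nonneg_iff_posSemidef]

variable [Fintype m]

def guessingProbability (ρ : X → Matrix m m ℂ) : (X → Matrix m m ℂ) →ₗ[ℝ] ℝ where
  toFun E := ∑ x, (E x * ρ x).trace.re
  map_add' E F := by simp [add_mul, sum_add_distrib]
  map_smul' r E := by simp [mul_sum]

theorem exists_povm_isMaxOn_guessingProbability_ncard_le [Nonempty X]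
    (ρ : X → Matrix m m ℂ) :
    ∃ E : X → Matrix m m ℂ, ((∀ x, (E x).PosSemidef) ∧ ∑ x, E x = 1) ∧
      IsMaxOn (guessingProbability ρ) {F | (∀ x, (F x).PosSemidef) ∧ ∑ x, F x = 1} E ∧
      {x | E x ≠ 0}.ncard ≤ Fintype.card m ^ 2 := by
  simpa only [isPOVM_iff_posSemidef, finrank_matrix, finrank_self, mul_one, sq] using
    exists_isPOVM_isMaxOn_ncard_le_finrank (A := Matrix m m ℂ) (guessingProbability ρ)

end Matrix

theorem qsd_exists_optimal_few_outcomes_general {n : ℕ} {X : Type*} [Fintype X] [Nonempty X]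
    (ρ : X → Matrix (Fin n) (Fin n) ℂ) :
    ∃ E : X → Matrix (Fin n) (Fin n) ℂ,
      (∀ x, (E x).PosSemidef) ∧ (∑ x, E x) = 1 ∧
      (∑ x, ((E x * ρ x).trace).re) =
        sSup {p : ℝ | ∃ F : X → Matrix (Fin n) (Fin n) ℂ,
          (∀ x, (F x).PosSemidef) ∧ (∑ x, F x) = 1 ∧
          p = ∑ x, ((F x * ρ x).trace).re} ∧
      ({x : X | E x ≠ 0}.ncard ≤ n ^ 2) := by
  obtain ⟨E, hE, hmax, hcard⟩ := exists_povm_isMaxOn_guessingProbability_ncard_le ρ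
  refine ⟨E, hE.1, hE.2, Eq.symm <| IsGreatest.csSup_eq ⟨⟨E, hE.1, hE.2, rfl⟩, ?_⟩,
    by simpa using hcard⟩
  rintro _ ⟨F, hF, hFsum, rfl⟩
  exact hmax ⟨hF, hFsum⟩

/-- Optimal strategies with at most `n²` outcomes: every discrimination problem on ℂ^n
admits an optimal POVM `E` (attaining `P_guess`) such that `{x | E x ≠ 0}` has at most
`n²` elements. -/
theorem qsd_exists_optimal_few_outcomes {n : ℕ} {X : Type*} [Fintype X] [Nonempty X]
    (ρ : X → Matrix (Fin n) (Fin n) ℂ)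
    (hρ : ∀ x, (ρ x).PosSemidef)
    (hρtr : (∑ x, (ρ x).trace) = 1) :
    ∃ E : X → Matrix (Fin n) (Fin n) ℂ,
      (∀ x, (E x).PosSemidef) ∧ (∑ x, E x) = 1 ∧
      (∑ x, ((E x * ρ x).trace).re) =
        sSup {p : ℝ | ∃ F : X → Matrix (Fin n) (Fin n) ℂ,
          (∀ x, (F x).PosSemidef) ∧ (∑ x, F x) = 1 ∧
          p = ∑ x, ((F x * ρ x).trace).re} ∧
      ({x : X | E x ≠ 0}.ncard ≤ n ^ 2) :=
  qsd_exists_optimal_few_outcomes_general ρ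
end

section
/- (Optimal qubit measurements have rank-one elements.) Let (ρ_x)_{x∈X} be a discrimination problem on ℂ² and let σ be a Hermitian 2×2 matrix with σ − ρ_x positive semidefinite for all x ∈ X and Re Tr(σ) = P_guess. If σ ≠ ρ_x for every x ∈ X, then every optimal POVM (E_x)_{x∈X} satisfies rank(E_x) ≤ 1 for every x ∈ X. -/
open scoped ComplexOrder

/-!
Complementary slackness: for a POVM `E` and a feasible `σ`,
`Re Tr σ - p(E) = ∑ₓ Re Tr((σ - ρₓ) Eₓ)`, a sum of traces of products of positive semidefinite
matrices `A = a⋆a`, `B = b⋆b`; since `Tr(AB) = Tr((ba⋆)⋆(ba⋆))`, each term is nonnegative and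
vanishes only if `AB = 0`. So if `E` is optimal and `Re Tr σ = P_guess`, then
`(σ - ρₓ) Eₓ = 0` for every `x`, and Sylvester's inequality in dimension 2 gives `rank (σ - ρₓ) + rank Eₓ ≤ 2`, with `rank (σ - ρₓ) ≥ 1` since `σ ≠ ρₓ`.
-/

namespace Matrix

open scoped MatrixOrder

theorem rank_eq_zero_iff {K l m : Type*} [Field K] [Fintype m] {A : Matrix l m K} :
    A.rank = 0 ↔ A = 0 := by
  classical
  rw [rank, Submodule.finrank_eq_zero, LinearMap.range_eq_bot, ← Matrix.toLin'_apply',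
    map_eq_zero_iff _ (toLin' (R := K) (m := l) (n := m)).injective]

theorem rank_add_one_le_card_of_mul_eq_zero {K l m p : Type*} [Field K] [Finite l] [Fintype m]
    [Fintype p] {A : Matrix l m K} {B : Matrix m p K} (hAB : A * B = 0) (hA : A ≠ 0) :
    B.rank + 1 ≤ Fintype.card m := by
  have := rank_add_rank_le_card_of_mul_eq_zero hAB
  have : A.rank ≠ 0 := by rwa [Ne, rank_eq_zero_iff]
  omega

variable {𝕜 n : Type*} [RCLike 𝕜] [Fintype n]

theorem trace_star_mul_self_mul_star_mul_self (a b : Matrix n n 𝕜) :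
    (star a * a * (star b * b)).trace = (star (b * star a) * (b * star a)).trace := by
  simp only [star_mul, star_star, mul_assoc]
  rw [trace_mul_comm]
  simp only [mul_assoc]

namespace PosSemidef

variable {A B : Matrix n n 𝕜}

theorem trace_mul_nonneg_s17 (hA : A.PosSemidef) (hB : B.PosSemidef) : 0 ≤ (A * B).trace := by
  classical
  obtain ⟨a, rfl⟩ := CStarAlgebra.nonneg_iff_eq_star_mul_self.mp hA.nonneg
  obtain ⟨b, rfl⟩ := CStarAlgebra.nonneg_iff_eq_star_mul_self.mp hB.nonneg
  rw [trace_star_mul_self_mul_star_mul_self]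
  exact (posSemidef_conjTranspose_mul_self _).trace_nonneg

theorem mul_eq_zero_of_trace_mul_eq_zero (hA : A.PosSemidef) (hB : B.PosSemidef)
    (h : (A * B).trace = 0) : A * B = 0 := by
  classical
  obtain ⟨a, rfl⟩ := CStarAlgebra.nonneg_iff_eq_star_mul_self.mp hA.nonneg
  obtain ⟨b, rfl⟩ := CStarAlgebra.nonneg_iff_eq_star_mul_self.mp hB.nonneg
  rw [trace_star_mul_self_mul_star_mul_self, star_eq_conjTranspose,
    trace_conjTranspose_mul_self_eq_zero_iff] at h
  have hab : a * star b = 0 := by simpa using congrArg star h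
  rw [mul_assoc, ← mul_assoc a, hab, zero_mul, mul_zero]

end PosSemidef

end Matrix

open Matrix in
theorem complementary_slackness {𝕜 n X : Type*} [RCLike 𝕜] [Fintype n] [DecidableEq n]
    [Fintype X] {ρ E : X → Matrix n n 𝕜} {σ : Matrix n n 𝕜}
    (hfeas : ∀ x, (σ - ρ x).PosSemidef) (hE : ∀ x, (E x).PosSemidef) (hEsum : ∑ x, E x = 1)
    (hopt : ∑ x, RCLike.re (E x * ρ x).trace = RCLike.re σ.trace) (x : X) :
    (σ - ρ x) * E x = 0 := by
  have hslack : ∑ y, ((σ - ρ y) * E y).trace = σ.trace - ∑ y, (E y * ρ y).trace := by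
    simp only [sub_mul, trace_sub, Finset.sum_sub_distrib, trace_mul_comm (ρ _)]
    rw [← trace_sum, ← Finset.mul_sum, hEsum, mul_one]
  have hnonneg : ∀ y, 0 ≤ ((σ - ρ y) * E y).trace := fun y ↦ (hfeas y).trace_mul_nonneg_s17 (hE y)
  have hsum : ∑ y, ((σ - ρ y) * E y).trace = 0 := by
    obtain ⟨-, him⟩ := RCLike.nonneg_iff.mp (Finset.sum_nonneg fun y _ ↦ hnonneg y)
    refine RCLike.ext ?_ (by simpa using him)
    rw [hslack, map_sub, map_sum, hopt, sub_self, map_zero]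
  exact (hfeas x).mul_eq_zero_of_trace_mul_eq_zero (hE x) <|
    (Finset.sum_eq_zero_iff_of_nonneg fun y _ ↦ hnonneg y).mp hsum x (Finset.mem_univ x)

theorem qsd_qubit_optimal_rank_one_general {X : Type*} [Fintype X]
    (ρ : X → Matrix (Fin 2) (Fin 2) ℂ)
    (σ : Matrix (Fin 2) (Fin 2) ℂ)
    (hfeas : ∀ x, (σ - ρ x).PosSemidef)
    (hσtr : (σ.trace).re =
      sSup {p : ℝ | ∃ G : X → Matrix (Fin 2) (Fin 2) ℂ,
        (∀ x, (G x).PosSemidef) ∧ (∑ x, G x) = 1 ∧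
        p = ∑ x, ((G x * ρ x).trace).re})
    (hne : ∀ x, σ ≠ ρ x)
    (E : X → Matrix (Fin 2) (Fin 2) ℂ)
    (hE : ∀ x, (E x).PosSemidef) (hEsum : (∑ x, E x) = 1)
    (hEopt : (∑ x, ((E x * ρ x).trace).re) =
      sSup {p : ℝ | ∃ G : X → Matrix (Fin 2) (Fin 2) ℂ,
        (∀ x, (G x).PosSemidef) ∧ (∑ x, G x) = 1 ∧
        p = ∑ x, ((G x * ρ x).trace).re}) :
    ∀ x, (E x).rank ≤ 1 := by
  intro x
  have hslack := complementary_slackness hfeas hE hEsum (hEopt.trans hσtr.symm) x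
  simpa using Matrix.rank_add_one_le_card_of_mul_eq_zero hslack (sub_ne_zero.mpr (hne x))

/-- Optimal qubit measurements have rank-one elements: if `σ` is the Lagrange operator
of a qubit discrimination problem and `σ ≠ ρ x` for every `x`, then every optimal POVM
`E` satisfies `rank (E x) ≤ 1` for every `x`. -/
theorem qsd_qubit_optimal_rank_one {X : Type*} [Fintype X] [Nonempty X]
    (ρ : X → Matrix (Fin 2) (Fin 2) ℂ)
    (hρ : ∀ x, (ρ x).PosSemidef)
    (hρtr : (∑ x, (ρ x).trace) = 1)
    (σ : Matrix (Fin 2) (Fin 2) ℂ)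
    (hσ : σ.IsHermitian)
    (hfeas : ∀ x, (σ - ρ x).PosSemidef)
    (hσtr : (σ.trace).re =
      sSup {p : ℝ | ∃ G : X → Matrix (Fin 2) (Fin 2) ℂ,
        (∀ x, (G x).PosSemidef) ∧ (∑ x, G x) = 1 ∧
        p = ∑ x, ((G x * ρ x).trace).re})
    (hne : ∀ x, σ ≠ ρ x)
    (E : X → Matrix (Fin 2) (Fin 2) ℂ)
    (hE : ∀ x, (E x).PosSemidef) (hEsum : (∑ x, E x) = 1)
    (hEopt : (∑ x, ((E x * ρ x).trace).re) =
      sSup {p : ℝ | ∃ G : X → Matrix (Fin 2) (Fin 2) ℂ,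
        (∀ x, (G x).PosSemidef) ∧ (∑ x, G x) = 1 ∧
        p = ∑ x, ((G x * ρ x).trace).re}) :
    ∀ x, (E x).rank ≤ 1 :=
  qsd_qubit_optimal_rank_one_general ρ σ hfeas hσtr hne E hE hEsum hEopt
end
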